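/- arXiv:2507.23482 — 7 statements merged into one kernel-verified Lean document; each statement's English description precedes it below -/
import Mathlib

section
/- Let m = 2^p − 1 with p > 1 an integer. Then in the ring Q_m, the element (x_1 + x_2 + ⋯ + x_m)^m equals 0. -/
/-!
Write `σ_b = x_1 + ⋯ + x_b`. The relation `x_i^2 = x_{i-1} x_i` lets a generator be absorbed into
a product of consecutive generators that contains it or ends just above it, lengthening the
product downwards; a product reaching below `x_1` vanishes. Expanding `σ_{b+1} = σ_b + x_{b+1}`
binomially therefore gives `σ_b^e · x_{e+1} ⋯ x_m = φ(b, e) · x_1 ⋯ x_m` with `φ(b, e) ∈ 𝔽_2`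
obeying a binomial recursion in `b`. Its solution is `φ(b, e) = [e even, e ≤ b]` for even `b` and
`φ(b, e) = [e ≤ 1]` for odd `b` (the step from even `b` uses that a set of `e ≥ 1` elements has
`2^{e-1}` subsets of even size). Hence `σ_m^m = φ(m, m) · x_1 ⋯ x_m = 0` for every odd `m ≥ 3`.
-/

open MvPolynomial Finset
open Fin.NatCast

noncomputable section

/-- The defining ideal of `Q_m`: generated by `x_1^2` and `x_i^2 - x_{i-1} x_i` for `2 ≤ i ≤ m`
(variables are 1-based; `X ((i-1 : ℕ) : Fin m)` is `x_i`). -/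
def Qrel (m : ℕ) [NeZero m] : Ideal (MvPolynomial (Fin m) (ZMod 2)) :=
  Ideal.span ((fun i : ℕ =>
      X ((i - 1 : ℕ) : Fin m) ^ 2 -
        (if i = 1 then 0 else X ((i - 2 : ℕ) : Fin m) * X ((i - 1 : ℕ) : Fin m))) ''
    Set.Icc 1 m)

/-- The ring `Q_m`. -/
abbrev Qring (m : ℕ) [NeZero m] : Type :=
  MvPolynomial (Fin m) (ZMod 2) ⧸ Qrel m

/-- The image of `x_i` (1-based, for `1 ≤ i ≤ m`) in `Q_m`. -/
def xQ (m : ℕ) [NeZero m] (i : ℕ) : Qring m :=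
  Ideal.Quotient.mk (Qrel m) (X ((i - 1 : ℕ) : Fin m))

theorem add_pow_mul_eq_sum {R : Type*} [CommSemiring R] (a c y : R) (e : ℕ) :
    (a + c) ^ e * y = ∑ k ∈ range (e + 1), e.choose k • (a ^ k * (c ^ (e - k) * y)) := by
  rw [add_pow, sum_mul]
  refine sum_congr rfl fun k _ => ?_
  rw [nsmul_eq_mul]
  ring

theorem sum_range_choose_even {n : ℕ} (hn : n ≠ 0) :
    ∑ k ∈ range (n + 1), (if Even k then (n.choose k : ℤ) else 0) = 2 ^ (n - 1) := by
  have hterm : ∀ k, 2 * (if Even k then (n.choose k : ℤ) else 0) =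
      n.choose k + (-1) ^ k * n.choose k := by
    intro k
    rcases Nat.even_or_odd k with hk | hk
    · rw [if_pos hk, hk.neg_one_pow]; ring
    · rw [if_neg (Nat.not_even_iff_odd.2 hk), hk.neg_one_pow]; ring
  have htwice : 2 * ∑ k ∈ range (n + 1), (if Even k then (n.choose k : ℤ) else 0) = 2 ^ n := by
    rw [mul_sum, sum_congr rfl fun k _ => hterm k, sum_add_distrib,
      Int.alternating_sum_range_choose_of_ne hn, add_zero]
    exact_mod_cast Nat.sum_range_choose n
  have hpow : (2 : ℤ) ^ n = 2 * 2 ^ (n - 1) := by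
    rw [← pow_succ', Nat.sub_add_cancel (Nat.one_le_iff_ne_zero.2 hn)]
  rw [hpow] at htwice
  exact mul_left_cancel₀ two_ne_zero htwice

theorem sum_range_choose_even_zmod_two (n : ℕ) :
    ∑ k ∈ range (n + 1), (if Even k then (n.choose k : ZMod 2) else 0) =
      if n ≤ 1 then 1 else 0 := by
  rcases Nat.eq_zero_or_pos n with rfl | hn
  · simp
  have hcast := congrArg (Int.cast : ℤ → ZMod 2) (sum_range_choose_even hn.ne')
  push_cast [Int.cast_sum, apply_ite] at hcast
  rw [hcast]
  rcases (show n = 1 ∨ 2 ≤ n by omega) with rfl | h2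
  · simp
  · rw [if_neg (by omega), ← Nat.sub_add_cancel (show 1 ≤ n - 1 by omega), pow_succ]
    simp [show (2 : ZMod 2) = 0 from rfl]

/-- The coefficient `φ(b, e)` of the header, in closed form. -/
def topCoeff (b e : ℕ) : ZMod 2 :=
  if Even b then (if Even e ∧ e ≤ b then 1 else 0) else (if e ≤ 1 then 1 else 0)

theorem topCoeff_eq_zero_of_lt {b e : ℕ} (h : b < e) : topCoeff b e = 0 := by
  unfold topCoeff
  rcases Nat.even_or_odd b with hb | hb
  · rw [if_pos hb, if_neg (by omega)]
  · rw [if_neg (Nat.not_even_iff_odd.2 hb), if_neg (by have := hb.pos; omega)]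

theorem topCoeff_succ {b e : ℕ} (he : e ≤ b + 1) :
    topCoeff (b + 1) e = ∑ k ∈ range (e + 1), (e.choose k : ZMod 2) * topCoeff b k := by
  rcases Nat.even_or_odd b with hb | hb
  · have hterm : ∀ k ∈ range (e + 1), (e.choose k : ZMod 2) * topCoeff b k =
        if Even k then (e.choose k : ZMod 2) else 0 := by
      intro k hk
      have hkb : Even k → k ≤ b := fun hk' => by
        have : k ≠ b + 1 := by rintro rfl; exact Nat.not_even_iff_odd.2 hb.add_one hk'
        have := mem_range.1 hk
        omega
      by_cases hk' : Even k <;> simp [topCoeff, hb, hk', hkb]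
    rw [sum_congr rfl hterm, sum_range_choose_even_zmod_two, topCoeff,
      if_neg (Nat.not_even_iff_odd.2 hb.add_one)]
  · have hterm : ∀ k, (e.choose k : ZMod 2) * topCoeff b k =
        if k ≤ 1 then (e.choose k : ZMod 2) else 0 := by
      intro k
      by_cases hk : k ≤ 1 <;> simp [topCoeff, Nat.not_even_iff_odd.2 hb, hk]
    simp only [hterm]
    rcases e with _ | e
    · simp [topCoeff]
    rw [sum_range_succ', sum_range_succ', sum_eq_zero fun k _ => if_neg (by omega)]
    simp only [topCoeff, hb.add_one, if_true, show e + 1 ≤ b + 1 by omega, and_true]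
    rcases Nat.even_or_odd (e + 1) with h | h
    · simp [h, h.natCast_zmod_two]
    · simp [Nat.not_even_iff_odd.2 h, h.natCast_zmod_two]
      decide

/-- The relations of `Q_m` on `x 1, …, x m`, with the convention `x 0 = 0`: it turns `x 1 ^ 2 = 0`
into the case `i = 1` of `sq`, and makes every product of consecutive generators reaching below
`x 1` vanish. -/
structure IsQFamily {R : Type*} [CommRing R] (m : ℕ) (x : ℕ → R) : Prop where
  zero : x 0 = 0
  sq : ∀ i ≤ m, x i ^ 2 = x (i - 1) * x i

section intervalProd

variable {R : Type*} [CommRing R] {m : ℕ} {x : ℕ → R}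

def intervalProd (x : ℕ → R) (r L : ℕ) : R :=
  ∏ j ∈ range L, x (r - j)

@[simp]
theorem intervalProd_zero (r : ℕ) : intervalProd x r 0 = 1 :=
  prod_range_zero _

theorem intervalProd_succ (r L : ℕ) :
    intervalProd x r (L + 1) = intervalProd x r L * x (r - L) :=
  prod_range_succ _ _

theorem intervalProd_dvd_succ (r L : ℕ) :
    intervalProd x r (L - 1) ∣ intervalProd x (r + 1) L := by
  rcases L with _ | L
  · exact one_dvd _
  · refine ⟨x (r + 1), ?_⟩
    simp only [intervalProd, prod_range_succ', Nat.add_sub_add_right, Nat.sub_zero,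
      Nat.add_sub_cancel]

namespace IsQFamily

theorem intervalProd_eq_zero (hx : IsQFamily m x) {r L : ℕ} (h : r < L) :
    intervalProd x r L = 0 :=
  prod_eq_zero (mem_range.2 h) (by rw [Nat.sub_self, hx.zero])

theorem mul_intervalProd (hx : IsQFamily m x) {r L t : ℕ} (hr : r ≤ m) (ht : r - L ≤ t)
    (htr : t ≤ r) : x t * intervalProd x r L = intervalProd x r (L + 1) := by
  induction L with
  | zero =>
    obtain rfl : t = r := by omega
    simp [intervalProd]
  | succ L ih =>
    rcases (show t = r - (L + 1) ∨ r - L ≤ t by omega) with rfl | ht'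
    · rw [intervalProd_succ r (L + 1), mul_comm]
    · rw [intervalProd_succ r L, ← mul_assoc, ih ht', intervalProd_succ r L, mul_assoc, ← pow_two,
        hx.sq _ (by omega), intervalProd_succ r (L + 1), intervalProd_succ r L,
        show r - L - 1 = r - (L + 1) by omega]
      ring

theorem pow_mul_intervalProd (hx : IsQFamily m x) {r L t : ℕ} (hr : r ≤ m) (ht : r - L ≤ t)
    (htr : t ≤ r) (j : ℕ) : x t ^ j * intervalProd x r L = intervalProd x r (L + j) := by
  induction j with
  | zero => simp
  | succ j ih =>
    rw [pow_succ', mul_assoc, ih, hx.mul_intervalProd hr (by omega) htr, add_assoc]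

theorem sum_pow_mul_intervalProd_eq_zero (hx : IsQFamily m x) {b : ℕ} (hb : b ≤ m) {e L : ℕ}
    (h : b < e + L) : (∑ i ∈ Icc 1 b, x i) ^ e * intervalProd x b L = 0 := by
  induction b generalizing e L with
  | zero =>
    rcases Nat.eq_zero_or_pos e with rfl | he
    · rw [pow_zero, one_mul, hx.intervalProd_eq_zero (by omega)]
    · simp [zero_pow he.ne']
  | succ b ih =>
    rw [sum_Icc_succ_top (by omega), add_pow_mul_eq_sum]
    refine sum_eq_zero fun k hk => ?_
    have hk := mem_range.1 hk
    obtain ⟨c, hc⟩ := intervalProd_dvd_succ (x := x) b (L + (e - k))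
    rw [hx.pow_mul_intervalProd hb (by omega) le_rfl, hc, ← mul_assoc, ih (by omega) (by omega),
      zero_mul, smul_zero]

theorem sum_pow_mul_intervalProd_eq_topCoeff_smul [Algebra (ZMod 2) R] (hx : IsQFamily m x)
    {b e : ℕ} (hb : b ≤ m) (he : e ≤ m) :
    (∑ i ∈ Icc 1 b, x i) ^ e * intervalProd x m (m - e) = topCoeff b e • intervalProd x m m := by
  induction b generalizing e with
  | zero =>
    rcases Nat.eq_zero_or_pos e with rfl | he0
    · simp [topCoeff]
    · simp [zero_pow he0.ne', topCoeff_eq_zero_of_lt he0]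
  | succ b ih =>
    by_cases heb : b + 1 < e
    · have hvanish := hx.sum_pow_mul_intervalProd_eq_zero hb (L := 0) heb
      rw [intervalProd_zero, mul_one] at hvanish
      rw [hvanish, zero_mul, topCoeff_eq_zero_of_lt heb, zero_smul]
    rw [sum_Icc_succ_top (by omega), add_pow_mul_eq_sum, topCoeff_succ (by omega), sum_smul]
    refine sum_congr rfl fun k hk => ?_
    have hk := mem_range.1 hk
    rw [hx.pow_mul_intervalProd le_rfl (by omega) hb, show m - e + (e - k) = m - k by omega,
      ih (by omega) (by omega), ← Nat.cast_smul_eq_nsmul (ZMod 2), smul_smul]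

end IsQFamily

end intervalProd

theorem IsQFamily.sum_pow_self_eq_zero {R : Type*} [CommRing R] [Algebra (ZMod 2) R] {m : ℕ}
    {x : ℕ → R} (hx : IsQFamily m x) (hodd : Odd m) (hm : 1 < m) :
    (∑ i ∈ Icc 1 m, x i) ^ m = 0 := by
  have h := hx.sum_pow_mul_intervalProd_eq_topCoeff_smul le_rfl le_rfl (b := m) (e := m)
  rw [Nat.sub_self, intervalProd_zero, mul_one] at h
  rw [h, topCoeff, if_neg (Nat.not_even_iff_odd.2 hodd), if_neg (by omega), zero_smul]

theorem xQ_sq {m : ℕ} [NeZero m] {i : ℕ} (h1 : 1 ≤ i) (h2 : i ≤ m) :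
    xQ m i ^ 2 = (if i = 1 then 0 else xQ m (i - 1)) * xQ m i := by
  have hmem : _ ∈ Qrel m := Ideal.subset_span ⟨i, Set.mem_Icc.2 ⟨h1, h2⟩, rfl⟩
  rw [← Ideal.Quotient.mk_eq_mk_iff_sub_mem] at hmem
  split_ifs at hmem ⊢ with hi
  · simpa [xQ] using hmem
  · simpa [xQ, show i - 1 - 1 = i - 2 by omega] using hmem

theorem isQFamily_xQ (m : ℕ) [NeZero m] : IsQFamily m fun i => if i = 0 then 0 else xQ m i where
  zero := if_pos rfl
  sq i hi := by
    rcases Nat.eq_zero_or_pos i with rfl | hi0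
    · simp
    simp only [if_neg hi0.ne', xQ_sq hi0 hi, show i - 1 = 0 ↔ i = 1 by omega]

/-- Theorem 2.5: for `m = 2^p - 1` with `p > 1`, `(x_1 + ⋯ + x_m)^m = 0` in `Q_m`. -/
theorem statement0 (p : ℕ) (hp : 1 < p) (m : ℕ) [NeZero m] (hm : m = 2 ^ p - 1) :
    (∑ i ∈ Finset.Icc 1 m, xQ m i) ^ m = 0 := by
  have hpow : 2 ^ 2 ≤ 2 ^ p := Nat.pow_le_pow_right two_pos hp
  have hodd : Odd m :=
    hm ▸ Nat.Even.sub_odd (by omega) (Nat.even_pow.2 ⟨even_two, by omega⟩) odd_one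
  have hsum : ∑ i ∈ Icc 1 m, xQ m i = ∑ i ∈ Icc 1 m, if i = 0 then 0 else xQ m i :=
    sum_congr rfl fun i hi => (if_neg (by simp at hi; omega)).symm
  rw [hsum]
  exact (isQFamily_xQ m).sum_pow_self_eq_zero hodd (by omega)
end
end

section
/- Let m ≥ 1 and let e_1,…,e_m be nonnegative integers with e_1 + ⋯ + e_m = m. Then the monomial x_1^{e_1}⋯x_m^{e_m} equals 0 in Q_m if and only if there exists d with 1 ≤ d ≤ m such that e_1 + ⋯ + e_d > d. -/
/-!
By induction on `d`, a monomial in `x_1, …, x_d` of degree greater than `d` vanishes in `Q_m`: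
a factor `x_d^k` with `k ≥ 2` equals `x_{d-1}^{k-1} x_d`, which moves the excess degree to
`x_1, …, x_{d-1}`, and `x_1^2 = 0`.

Conversely, call an exponent vector admissible when all its partial degrees satisfy
`e_1 + ⋯ + e_d ≤ d`, and consider the sum of the coefficients of the admissible monomials of a
fixed degree. It vanishes on the defining ideal of `Q_m`: no admissible monomial is divisible by
`x_1^2`, and trading a factor `x_i^2` for `x_{i-1} x_i` is a bijection between the admissible
monomials divisible by the one and by the other, so `g x_i^2` and `g x_{i-1} x_i` have the same
coefficient sum for every `g`. An admissible monomial has coefficient sum `1`, hence is nonzero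
in `Q_m`.
-/

open MvPolynomial Finset
open Fin.NatCast

noncomputable section

theorem pow_succ_eq_pow_mul_of_sq_eq_mul {M : Type*} [CommMonoid M] {a b : M}
    (h : b ^ 2 = a * b) : ∀ n : ℕ, b ^ (n + 1) = a ^ n * b
  | 0 => by rw [zero_add, pow_one, pow_zero, one_mul]
  | n + 1 => by
    rw [pow_succ, pow_succ_eq_pow_mul_of_sq_eq_mul h n, mul_assoc, ← sq, h, pow_succ, mul_assoc]

section Vanishing

variable {M : Type*} [CommMonoidWithZero M] {x : ℕ → M} {m : ℕ}

theorem prod_Icc_pow_mul_pow_eq_zero (h1 : x 1 ^ 2 = 0)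
    (hsq : ∀ i, 1 ≤ i → i < m → x (i + 1) ^ 2 = x i * x (i + 1)) {d : ℕ} (hd : 1 ≤ d)
    (hdm : d ≤ m) (f : ℕ → ℕ) (c : ℕ) (h : d < ∑ i ∈ Icc 1 d, f i + c) :
    (∏ i ∈ Icc 1 d, x i ^ f i) * x d ^ c = 0 := by
  induction d, hd using Nat.le_induction generalizing c with
  | base =>
    rw [Icc_self, sum_singleton] at h
    rw [Icc_self, prod_singleton, ← pow_add]
    exact pow_eq_zero_of_le (by omega) h1
  | succ d hd ih =>
    rw [sum_Icc_succ_top (by omega)] at h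
    rw [prod_Icc_succ_top (by omega), mul_assoc, ← pow_add]
    by_cases hk : f (d + 1) + c ≤ 1
    · have := ih (by omega) 0 (by omega)
      rw [pow_zero, mul_one] at this
      rw [this, zero_mul]
    · obtain ⟨k, hk⟩ := Nat.exists_eq_add_of_le' (show 2 ≤ f (d + 1) + c by omega)
      rw [hk, pow_succ_eq_pow_mul_of_sq_eq_mul (hsq d hd (by omega)), ← mul_assoc,
        ih (by omega) (k + 1) (by omega), zero_mul]

theorem prod_Icc_pow_eq_zero_of_lt_sum (h1 : x 1 ^ 2 = 0)
    (hsq : ∀ i, 1 ≤ i → i < m → x (i + 1) ^ 2 = x i * x (i + 1)) {e : ℕ → ℕ} {d : ℕ}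
    (hd : 1 ≤ d) (hdm : d ≤ m) (h : d < ∑ i ∈ Icc 1 d, e i) :
    ∏ i ∈ Icc 1 m, x i ^ e i = 0 := by
  have hzero := prod_Icc_pow_mul_pow_eq_zero h1 hsq hd hdm e 0 h
  rw [pow_zero, mul_one] at hzero
  exact zero_dvd_iff.1 (hzero ▸ prod_dvd_prod_of_subset _ _ _ (Icc_subset_Icc_right hdm))

end Vanishing

section CoefficientSum

variable {R σ : Type*} [CommSemiring R]

theorem sum_coeff_mul_monomial_one (D : Finset (σ →₀ ℕ)) (v : σ →₀ ℕ) (g : MvPolynomial σ R) :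
    ∑ μ ∈ D, coeff μ (g * monomial v 1) =
      ∑ ν ∈ D.preimage (· + v) (add_left_injective v).injOn, coeff ν g := by
  simp_rw [coeff_mul_monomial', mul_one]
  refine (sum_preimage (· + v) D (add_left_injective v).injOn
    (fun μ => if v ≤ μ then coeff (μ - v) g else 0) ?_).symm.trans (sum_congr rfl fun ν _ => ?_)
  · rintro μ - hμ
    exact if_neg fun hle => hμ ⟨μ - v, tsub_add_cancel_of_le hle⟩
  · simp

theorem sum_coeff_eq_zero_of_mem_span {D : Finset (σ →₀ ℕ)} {s : Set (MvPolynomial σ R)}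
    (hs : ∀ r ∈ s, ∀ g, ∑ μ ∈ D, coeff μ (g * r) = 0) {f : MvPolynomial σ R}
    (hf : f ∈ Ideal.span s) : ∑ μ ∈ D, coeff μ f = 0 := by
  obtain ⟨n, c, r, rfl⟩ := Submodule.mem_span_set'.1 hf
  simp_rw [coeff_sum, smul_eq_mul]
  rw [sum_comm]
  exact sum_eq_zero fun i _ => hs _ (r i).2 _

end CoefficientSum

section Admissible

variable {m : ℕ}

/-- The degree of the monomial with exponent vector `ν` in `x_1, …, x_d`: the entry `ν k` is the
exponent of `x_{k+1}`. -/
def prefixSum (d : ℕ) (ν : Fin m →₀ ℕ) : ℕ :=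
  ∑ k ∈ univ.filter fun k : Fin m => (k : ℕ) < d, ν k

def Admissible (ν : Fin m →₀ ℕ) : Prop := ∀ d ≤ m, prefixSum d ν ≤ d

open scoped Classical in
def admissibleOfDegree (m n : ℕ) : Finset (Fin m →₀ ℕ) :=
  {ν ∈ univ.finsuppAntidiag n | Admissible ν}

theorem prefixSum_add (d : ℕ) (μ ν : Fin m →₀ ℕ) :
    prefixSum d (μ + ν) = prefixSum d μ + prefixSum d ν := by
  simp only [prefixSum, Finsupp.coe_add, Pi.add_apply, sum_add_distrib]

theorem prefixSum_single (d : ℕ) (i : Fin m) (c : ℕ) :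
    prefixSum d (Finsupp.single i c) = if (i : ℕ) < d then c else 0 := by
  simp [prefixSum, Finsupp.single_apply]

theorem prefixSum_mono {d d' : ℕ} (h : d ≤ d') (ν : Fin m →₀ ℕ) :
    prefixSum d ν ≤ prefixSum d' ν :=
  sum_le_sum_of_subset (monotone_filter_right _ fun _ _ hk => lt_of_lt_of_le hk h)

theorem not_admissible_add_single_zero_two [NeZero m] (ν : Fin m →₀ ℕ) :
    ¬ Admissible (ν + Finsupp.single 0 2) := fun h => by
  have := h 1 NeZero.one_le
  rw [prefixSum_add, prefixSum_single, if_pos (by simp)] at this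
  omega

/-- Replacing `x_{i+1}^2` by `x_i x_{i+1}` only raises the partial degree at `i`, and there the
bound for the new monomial follows from the bound at `i + 1` for the old one. -/
theorem admissible_add_single_two_iff {i j : Fin m} (hij : (j : ℕ) + 1 = i)
    (ν : Fin m →₀ ℕ) :
    Admissible (ν + Finsupp.single i 2) ↔
      Admissible (ν + (Finsupp.single j 1 + Finsupp.single i 1)) := by
  simp only [Admissible, prefixSum_add, prefixSum_single]
  refine ⟨fun h d hdm => ?_, fun h d hdm => ?_⟩
  · by_cases hd : d = i
    · have := h (d + 1) (by omega)
      have := prefixSum_mono (Nat.le_add_right d 1) ν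
      split_ifs at * <;> omega
    · have := h d hdm
      split_ifs at * <;> omega
  · have := h d hdm
    split_ifs at * <;> omega

end Admissible

section Quotient

variable {m : ℕ} [NeZero m]

theorem Qrel_generator_mem {i : ℕ} (hi : 1 ≤ i) (him : i ≤ m) :
    X ((i - 1 : ℕ) : Fin m) ^ 2 -
        (if i = 1 then 0 else X ((i - 2 : ℕ) : Fin m) * X ((i - 1 : ℕ) : Fin m)) ∈ Qrel m :=
  Ideal.subset_span ⟨i, ⟨hi, him⟩, rfl⟩

theorem xQ_one_sq : xQ m 1 ^ 2 = 0 := by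
  have := Qrel_generator_mem (m := m) le_rfl NeZero.one_le
  rw [if_pos rfl, sub_zero] at this
  rw [xQ, ← map_pow]
  exact Ideal.Quotient.eq_zero_iff_mem.2 this

theorem xQ_succ_sq (i : ℕ) (hi : 1 ≤ i) (him : i < m) :
    xQ m (i + 1) ^ 2 = xQ m i * xQ m (i + 1) := by
  have := Ideal.Quotient.eq.2 (Qrel_generator_mem (i := i + 1) (by omega) him)
  rw [if_neg (by omega), show i + 1 - 2 = i - 1 by omega] at this
  simpa [xQ] using this

theorem sum_coeff_eq_zero_of_mem_Qrel (n : ℕ) {f : MvPolynomial (Fin m) (ZMod 2)}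
    (hf : f ∈ Qrel m) : ∑ μ ∈ admissibleOfDegree m n, coeff μ f = 0 := by
  classical
  refine sum_coeff_eq_zero_of_mem_span ?_ hf
  rintro _ ⟨i, ⟨hi, him⟩, rfl⟩ g
  dsimp only
  obtain rfl | ⟨j, rfl⟩ : i = 1 ∨ ∃ j, i = j + 2 := by
    rcases Nat.exists_eq_add_of_le' hi with ⟨j, rfl⟩
    cases j <;> simp
  · simp only [if_pos, sub_zero, Nat.sub_self, Fin.natCast_zero, X_pow_eq_monomial,
      sum_coeff_mul_monomial_one]
    refine sum_eq_zero fun ν hν => absurd ?_ (not_admissible_add_single_zero_two ν)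
    simpa [admissibleOfDegree] using (mem_filter.1 (mem_preimage.1 hν)).2
  · have hj : ((j : Fin m) : ℕ) + 1 = ((j + 1 : ℕ) : Fin m) := by
      rw [Fin.val_cast_of_lt (by omega), Fin.val_cast_of_lt (by omega)]
    rw [if_neg (by omega), show j + 2 - 1 = j + 1 by omega, Nat.add_sub_cancel, X_pow_eq_monomial,
      X, X, monomial_mul, one_mul, mul_sub]
    simp only [coeff_sub, sum_sub_distrib, sum_coeff_mul_monomial_one, sub_eq_zero]
    refine sum_congr (ext fun ν => ?_) fun _ _ => rfl
    simp only [mem_preimage, admissibleOfDegree, mem_filter, mem_finsuppAntidiag,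
      admissible_add_single_two_iff hj]
    simp [sum_add_distrib]

theorem mk_monomial_ne_zero_of_admissible {ν : Fin m →₀ ℕ} (hν : Admissible ν) :
    Ideal.Quotient.mk (Qrel m) (monomial ν 1) ≠ 0 := fun h => by
  classical
  have := sum_coeff_eq_zero_of_mem_Qrel (∑ k, ν k) (Ideal.Quotient.eq_zero_iff_mem.1 h)
  simp [coeff_monomial, admissibleOfDegree, hν] at this

end Quotient

section Exponents

def exponentsOf (m : ℕ) (e : ℕ → ℕ) : Fin m →₀ ℕ :=
  Finsupp.equivFunOnFinite.symm fun k => e (k + 1)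

variable {m : ℕ}

theorem prod_xQ_pow_eq_mk_monomial [NeZero m] (e : ℕ → ℕ) :
    ∏ i ∈ Icc 1 m, xQ m i ^ e i = Ideal.Quotient.mk (Qrel m) (monomial (exponentsOf m e) 1) := by
  rw [monomial_eq, C_1, one_mul, Finsupp.prod_pow, map_prod, ← Ico_add_one_right_eq_Icc,
    ← zero_add 1, ← prod_Ico_add', ← range_eq_Ico, ← Fin.prod_univ_eq_prod_range]
  refine prod_congr rfl fun k _ => ?_
  simp [xQ, exponentsOf]

theorem prefixSum_exponentsOf (e : ℕ → ℕ) {d : ℕ} (hdm : d ≤ m) :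
    prefixSum d (exponentsOf m e) = ∑ i ∈ Icc 1 d, e i := by
  rw [prefixSum, sum_filter, ← Ico_add_one_right_eq_Icc, ← zero_add 1, ← sum_Ico_add',
    ← range_eq_Ico]
  simp only [exponentsOf, Finsupp.coe_equivFunOnFinite_symm]
  rw [Fin.sum_univ_eq_sum_range (fun k => if k < d then e (k + 1) else 0), ← sum_filter]
  congr 1
  ext k
  simp only [mem_filter, mem_range]
  omega

end Exponents

theorem statement1_general (m : ℕ) [NeZero m] (e : ℕ → ℕ) :
    (∏ i ∈ Finset.Icc 1 m, xQ m i ^ e i) = 0 ↔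
      ∃ d, 1 ≤ d ∧ d ≤ m ∧ d < ∑ i ∈ Finset.Icc 1 d, e i := by
  constructor
  · intro h
    by_contra! hsmall
    refine mk_monomial_ne_zero_of_admissible (fun d hdm => ?_)
      ((prod_xQ_pow_eq_mk_monomial e).symm.trans h)
    rw [prefixSum_exponentsOf e hdm]
    rcases Nat.eq_zero_or_pos d with rfl | hd
    · simp
    · exact hsmall d hd hdm
  · rintro ⟨d, hd, hdm, hlt⟩
    exact prod_Icc_pow_eq_zero_of_lt_sum xQ_one_sq xQ_succ_sq hd hdm hlt

/-- A degree-`m` monomial `x_1^{e_1} ⋯ x_m^{e_m}` is `0` in `Q_m` iff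
`e_1 + ⋯ + e_d > d` for some `1 ≤ d ≤ m`. -/
theorem statement1 (m : ℕ) [NeZero m] (hm : 1 ≤ m) (e : ℕ → ℕ)
    (he : ∑ i ∈ Finset.Icc 1 m, e i = m) :
    (∏ i ∈ Finset.Icc 1 m, xQ m i ^ e i) = 0 ↔
      ∃ d, 1 ≤ d ∧ d ≤ m ∧ d < ∑ i ∈ Finset.Icc 1 d, e i :=
  statement1_general m e
end
end

section
/- Let r ≥ 1 and let p_1 < p_2 < ⋯ < p_r be integers with p_1 ≥ 2. Let t : {1,2,3,…} → ℕ be a finitely supported function. Then t satisfies both Σ_i t_i(2^i − 1) = (2^{p_1} + ⋯ + 2^{p_r}) − r and Σ_i t_i ≤ r if and only if t_i = 1 when i ∈ {p_1,…,p_r} and t_i = 0 otherwise. -/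
open Finset

/-!
Read `t` as the multiset `m` of exponents in which `i` occurs `t i` times, and let `s` be the set
of the `p j`. The two conditions say that `m`, padded with `r - #m` copies of the exponent `0`,
has `r` elements and power-of-two sum `∑ j, 2 ^ p j`. Merging two equal exponents `a, a` into
`a + 1` keeps the sum and shortens the multiset, so the binary expansion is the unique shortest
representation of a number as a sum of powers of two; the padded multiset therefore is `s`. Since
`0 ∉ s`, there is no padding and `m = s`.
-/

namespace Nat

lemma exists_card_add_one_eq_sum_map_two_pow_eq_of_not_nodup {m : Multiset ℕ} (hm : ¬ m.Nodup) :
    ∃ m' : Multiset ℕ, Multiset.card m' + 1 = Multiset.card m ∧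
      (m'.map (2 ^ ·)).sum = (m.map (2 ^ ·)).sum := by
  obtain ⟨a, ha⟩ : ∃ a, 2 ≤ m.count a := by
    simpa [Multiset.nodup_iff_count_le_one, Nat.lt_iff_add_one_le] using hm
  obtain ⟨m₀, rfl⟩ : ∃ m₀, m = Multiset.replicate 2 a + m₀ :=
    ⟨_, (add_tsub_cancel_of_le (Multiset.le_count_iff_replicate_le.1 ha)).symm⟩
  refine ⟨(a + 1) ::ₘ m₀, ?_, ?_⟩
  · simp
  · simp only [Multiset.map_cons, Multiset.sum_cons, Multiset.map_add, Multiset.map_replicate,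
      Multiset.sum_add, Multiset.sum_replicate, smul_eq_mul, pow_succ]
    ring

lemma bitIndices_sum_two_pow (s : Finset ℕ) : (∑ i ∈ s, 2 ^ i).bitIndices = s.sort := by
  rw [← bitIndices_sum_map_two_pow (sortedLT_sort s), ← Multiset.sum_coe, ← Multiset.map_coe,
    sort_eq]
  rfl

lemma coe_bitIndices_sum_map_two_pow_of_nodup {m : Multiset ℕ} (hm : m.Nodup) :
    ((m.map (2 ^ ·)).sum.bitIndices : Multiset ℕ) = m :=
  (congrArg _ (bitIndices_sum_two_pow ⟨m, hm⟩)).trans (sort_eq _ _)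

lemma length_bitIndices_sum_map_two_pow_le (m : Multiset ℕ) :
    (m.map (2 ^ ·)).sum.bitIndices.length ≤ Multiset.card m := by
  induction h : Multiset.card m using Nat.strong_induction_on generalizing m with
  | _ n ih =>
    by_cases hm : m.Nodup
    · rw [← h, ← Multiset.coe_card, coe_bitIndices_sum_map_two_pow_of_nodup hm]
    · obtain ⟨m', hcard, hsum⟩ := exists_card_add_one_eq_sum_map_two_pow_eq_of_not_nodup hm
      rw [← hsum]
      exact (ih _ (by omega) m' rfl).trans (by omega)

lemma coe_bitIndices_sum_map_two_pow_of_card_le {m : Multiset ℕ}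
    (hm : Multiset.card m ≤ (m.map (2 ^ ·)).sum.bitIndices.length) :
    ((m.map (2 ^ ·)).sum.bitIndices : Multiset ℕ) = m := by
  by_cases hnd : m.Nodup
  · exact coe_bitIndices_sum_map_two_pow_of_nodup hnd
  · obtain ⟨m', hcard, hsum⟩ := exists_card_add_one_eq_sum_map_two_pow_eq_of_not_nodup hnd
    have := length_bitIndices_sum_map_two_pow_le m'
    rw [hsum] at this
    omega

end Nat

namespace Multiset

lemma eq_val_of_sum_map_two_pow_eq_of_card_le {s : Finset ℕ} {m : Multiset ℕ}
    (hsum : (m.map (2 ^ ·)).sum = ∑ i ∈ s, 2 ^ i) (hcard : card m ≤ #s) : m = s.val := by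
  have hlen : card m ≤ (m.map (2 ^ ·)).sum.bitIndices.length := by
    rwa [hsum, Nat.bitIndices_sum_two_pow, Finset.length_sort]
  rw [← Nat.coe_bitIndices_sum_map_two_pow_of_card_le hlen, hsum, Nat.bitIndices_sum_two_pow,
    Finset.sort_eq]

lemma sum_map_two_pow_sub_one_add_card (m : Multiset ℕ) :
    (m.map (2 ^ · - 1)).sum + card m = (m.map (2 ^ ·)).sum := by
  induction m using Multiset.induction_on with
  | empty => simp
  | cons a m ih =>
    have := Nat.one_le_two_pow (n := a)
    simp only [map_cons, sum_cons, card_cons]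
    omega

lemma sum_map_two_pow_sub_one_eq_and_card_le_iff {s : Finset ℕ} (hs : 0 ∉ s) (m : Multiset ℕ) :
    ((m.map (2 ^ · - 1)).sum = ∑ i ∈ s, 2 ^ i - #s ∧ card m ≤ #s) ↔ m = s.val := by
  have hs_sum := sum_map_two_pow_sub_one_add_card s.val
  have hm_sum := sum_map_two_pow_sub_one_add_card m
  simp only [card_val, ← Finset.sum_eq_multiset_sum] at hs_sum
  constructor
  · rintro ⟨hsum, hcard⟩
    have hpad : m + replicate (#s - card m) 0 = s.val := by
      apply eq_val_of_sum_map_two_pow_eq_of_card_le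
      · simp only [map_add, map_replicate, pow_zero, sum_add, sum_replicate, smul_eq_mul, mul_one]
        omega
      · simp only [card_add, card_replicate]
        omega
    have hzero : #s - card m = 0 := by
      by_contra h
      exact hs (by simp [← Finset.mem_val, ← hpad, mem_replicate, h])
    simpa [hzero] using hpad
  · rintro rfl
    simp only [card_val, le_refl, and_true, ← Finset.sum_eq_multiset_sum]
    omega

end Multiset

theorem statement3_general (r : ℕ) (p : ℕ → ℕ) (hp1 : 2 ≤ p 1)
    (hmono : ∀ i j, 1 ≤ i → i < j → j ≤ r → p i < p j)
    (t : ℕ → ℕ) (ht0 : t 0 = 0) (hfin : {i | t i ≠ 0}.Finite) :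
    ((∑ᶠ i, t i * (2 ^ i - 1)) = (∑ j ∈ Finset.Icc 1 r, 2 ^ p j) - r ∧ (∑ᶠ i, t i) ≤ r) ↔
      ∀ i, 1 ≤ i → t i = if i ∈ (Finset.Icc 1 r).image p then 1 else 0 := by
  set s := (Icc 1 r).image p
  have hinj : Set.InjOn p (Icc 1 r) := StrictMonoOn.injOn fun i hi j hj hij =>
    hmono i j (mem_Icc.1 hi).1 hij (mem_Icc.1 hj).2
  have hs_card : #s = r := by simp [s, card_image_of_injOn hinj]
  have hs0 : 0 ∉ s := by
    simp only [s, mem_image, mem_Icc, not_exists, not_and]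
    rintro j ⟨hj1, hjr⟩ hpj
    rcases hj1.eq_or_lt with rfl | hj1
    · omega
    · have := hmono 1 j le_rfl hj1 hjr
      omega
  set m := Finsupp.toMultiset (Finsupp.ofSupportFinite t hfin)
  have hcount (i : ℕ) : m.count i = t i := Finsupp.count_toMultiset _ i
  have hfinsum (f : ℕ → ℕ) : ∑ᶠ i, t i * f i = (m.map f).sum := by
    simp [Multiset.sum_map_eq_finsum, hcount]
  have hcard : ∑ᶠ i, t i = Multiset.card m := by simpa using hfinsum 1
  have hm_iff := Multiset.sum_map_two_pow_sub_one_eq_and_card_le_iff hs0 m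
  rw [sum_image hinj, hs_card, Multiset.ext] at hm_iff
  rw [hfinsum, hcard, hm_iff]
  simp only [hcount, Multiset.count_eq_of_nodup s.nodup, Finset.mem_val]
  refine ⟨fun h i _ => h i, fun h i => ?_⟩
  rcases i.eq_zero_or_pos with rfl | hi
  · simp [ht0, hs0]
  · exact h i hi

/-- Lemma 2.4: for `p_1 < ⋯ < p_r` with `p_1 ≥ 2`, a finitely supported
`t : {1,2,3,…} → ℕ` satisfies `∑ t_i (2^i - 1) = (2^{p_1} + ⋯ + 2^{p_r}) - r` and
`∑ t_i ≤ r` iff `t_i = 1` for `i ∈ {p_1, …, p_r}` and `t_i = 0` otherwise. -/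
theorem statement3 (r : ℕ) (hr : 1 ≤ r) (p : ℕ → ℕ) (hp1 : 2 ≤ p 1)
    (hmono : ∀ i j, 1 ≤ i → i < j → j ≤ r → p i < p j)
    (t : ℕ → ℕ) (ht0 : t 0 = 0) (hfin : {i | t i ≠ 0}.Finite) :
    ((∑ᶠ i, t i * (2 ^ i - 1)) = (∑ j ∈ Finset.Icc 1 r, 2 ^ p j) - r ∧ (∑ᶠ i, t i) ≤ r) ↔
      ∀ i, 1 ≤ i → t i = if i ∈ (Finset.Icc 1 r).image p then 1 else 0 :=
  statement3_general r p hp1 hmono t ht0 hfin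
end

section
/- Let r ≥ 1 and p_1 < ⋯ < p_r be integers with p_1 ≥ 2; set P_j = 2^{p_j}, T_j = P_1 + ⋯ + P_j (with T_0 = 0), n = T_r + 1, and S = x_1 + ⋯ + x_{n−2} in R_n. Then for all i, j with 1 ≤ i < j ≤ r, setting D = T_j − P_i, for every function f from {1,…,D − P_j + 1} to {1,…,D − 1}, the element (∏_{k=1}^{D−P_j+1} x_{f(k)}) · (x_{D+1} x_{D+2} ⋯ x_n) · S^{P_j − 1} equals 0 in R_n. -/
open MvPolynomial Finset
open Fin.NatCast

noncomputable section

/-- The defining ideal of `R_n` (for `n ≥ 3`): generated by `x_1^2`, by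
`x_i^2 - x_{i-1} x_i` for `2 ≤ i ≤ n-1`, and by `x_n^2 - (x_1 + ⋯ + x_{n-2}) x_n`
(variables are 1-based; `X ((i-1 : ℕ) : Fin n)` is `x_i`). -/
def Rrel (n : ℕ) [NeZero n] : Ideal (MvPolynomial (Fin n) (ZMod 2)) :=
  Ideal.span ((fun i : ℕ =>
      X ((i - 1 : ℕ) : Fin n) ^ 2 -
        (if i = 1 then 0
         else if i = n then
           (∑ j ∈ Finset.Icc 1 (n - 2), X ((j - 1 : ℕ) : Fin n)) * X ((n - 1 : ℕ) : Fin n)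
         else X ((i - 2 : ℕ) : Fin n) * X ((i - 1 : ℕ) : Fin n))) ''
    Set.Icc 1 n)

/-- The ring `R_n`. -/
abbrev Rring (n : ℕ) [NeZero n] : Type :=
  MvPolynomial (Fin n) (ZMod 2) ⧸ Rrel n

/-- The image of `x_i` (1-based, for `1 ≤ i ≤ n`) in `R_n`. -/
def xR (n : ℕ) [NeZero n] (i : ℕ) : Rring n :=
  Ideal.Quotient.mk (Rrel n) (X ((i - 1 : ℕ) : Fin n))

/-!
Write `B = x_{D+1} ⋯ x_n` and `S_c = x_1 + ⋯ + x_c`. Multiplying a block `x_{c+1} ⋯ x_e` by one of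
its own variables `x_a` (`a < n`) gives `x_c` times the block, since `x_a² = x_{a-1} x_a` pushes the
extra factor down the block. Hence `B x_a = x_D B` for each of the `n - 1 - D` indices
`D ≤ a ≤ n - 2`; this number is even because all `P_k` are, so in characteristic two
`B S_{n-2} = S_{D-1} B`. The element is therefore `L · S_{D-1}^{P_j - 1} · B`, a sum of products of
`D` variables among `x_1, …, x_{D-1}`. Such a product vanishes: a product of more than `c` variables
among `x_1, …, x_c` is zero, as the copies of `x_c` collapse by `x_c^{k+1} = x_{c-1}^k x_c`, which
reduces to the case `c - 1` and ends at `x_1² = 0`.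
-/

/-- The relations of `R_m` other than the one for `x_m ^ 2`. -/
structure SquareChain {R : Type*} [CommSemiring R] (x : ℕ → R) (m : ℕ) : Prop where
  sq_one : x 1 ^ 2 = 0
  sq_succ : ∀ i, 1 ≤ i → i + 1 < m → x (i + 1) ^ 2 = x i * x (i + 1)

namespace SquareChain

variable {R : Type*} [CommSemiring R] {x : ℕ → R} {m : ℕ}

theorem pow_succ_eq (hx : SquareChain x m) {i : ℕ} (hi : 1 ≤ i) (him : i + 1 < m) (k : ℕ) :
    x (i + 1) ^ (k + 1) = x i ^ k * x (i + 1) := by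
  induction k with
  | zero => simp
  | succ k ih => rw [pow_succ, ih, mul_assoc, ← sq, hx.sq_succ i hi him, pow_succ]; ring

theorem multiset_prod_eq_zero (hx : SquareChain x m) {c : ℕ} (hcm : c < m) {M : Multiset ℕ}
    (hM : ∀ a ∈ M, a ∈ Icc 1 c) (hcard : c < Multiset.card M) : (M.map x).prod = 0 := by
  induction c generalizing M with
  | zero =>
    obtain ⟨a, ha⟩ := Multiset.card_pos_iff_exists_mem.1 hcard
    simpa using hM a ha
  | succ c ih =>
    classical
    set M' := M.filter (· ≠ c + 1)
    have hM' : ∀ a ∈ M', a ∈ Icc 1 c := fun a ha => by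
      have hne := (Multiset.mem_filter.1 ha).2
      have := mem_Icc.1 (hM a (Multiset.mem_of_mem_filter ha))
      exact mem_Icc.2 ⟨this.1, by omega⟩
    have hsplit : M = Multiset.replicate (M.count (c + 1)) (c + 1) + M' := by
      rw [← Multiset.filter_eq', Multiset.filter_add_not]
    have hcardM : Multiset.card M = M.count (c + 1) + Multiset.card M' := by
      conv_lhs => rw [hsplit]
      simp
    rw [hsplit, Multiset.map_add, Multiset.prod_add, Multiset.map_replicate,
      Multiset.prod_replicate]
    rcases hk : M.count (c + 1) with _ | k
    · rw [pow_zero, one_mul]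
      exact ih (by omega) hM' (by omega)
    rcases Nat.eq_zero_or_pos c with rfl | hc
    · have hM'0 : M' = 0 :=
        Multiset.eq_zero_of_forall_notMem fun a ha => by simpa using hM' a ha
      rw [hM'0, Multiset.map_zero, Multiset.prod_zero, mul_one]
      exact pow_eq_zero_of_le (by rw [hM'0, Multiset.card_zero] at hcardM; omega) hx.sq_one
    rw [hx.pow_succ_eq hc (by omega), mul_right_comm, ← Multiset.prod_replicate,
      ← Multiset.map_replicate, ← Multiset.prod_add, ← Multiset.map_add, ih (by omega), zero_mul]
    · intro a ha
      rcases Multiset.mem_add.1 ha with ha | ha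
      · rw [Multiset.eq_of_mem_replicate ha]; exact mem_Icc.2 ⟨hc, le_rfl⟩
      · exact hM' a ha
    · rw [Multiset.card_add, Multiset.card_replicate]; omega

theorem prod_Icc_mul_eq_mul_prod_Icc (hx : SquareChain x m) {c a e : ℕ} (hc : 1 ≤ c)
    (hca : c < a) (hae : a ≤ e) (ham : a < m) :
    (∏ b ∈ Icc (c + 1) e, x b) * x a = x c * ∏ b ∈ Icc (c + 1) e, x b := by
  have hblock : ∀ d, c < d → d < m →
      (∏ b ∈ Icc (c + 1) d, x b) * x d = x c * ∏ b ∈ Icc (c + 1) d, x b := by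
    intro d hcd hdm
    induction d, hcd using Nat.le_induction with
    | base => rw [Icc_self, prod_singleton, ← sq, hx.sq_succ c hc hdm]
    | succ d hcd ih =>
      rw [prod_Icc_succ_top (by omega), mul_assoc, ← sq, hx.sq_succ d (by omega) hdm,
        ← mul_assoc, ih (by omega), mul_assoc]
  induction e, hae using Nat.le_induction with
  | base => exact hblock a hca ham
  | succ e hae ih => rw [prod_Icc_succ_top (by omega), mul_right_comm, ih, mul_assoc]

theorem semiconjBy_prod_Icc_sum_Icc (hx : SquareChain x m) (h2 : (2 : R) = 0) {c t e : ℕ}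
    (hc : 1 ≤ c) (hct : c ≤ t + 1) (hte : t ≤ e) (htm : t < m) (heven : Even (t + 1 - c)) :
    SemiconjBy (∏ b ∈ Icc (c + 1) e, x b) (∑ a ∈ Icc 1 t, x a) (∑ a ∈ Icc 1 (c - 1), x a) := by
  set B := ∏ b ∈ Icc (c + 1) e, x b
  have hsplit : ∑ a ∈ Icc 1 t, x a = ∑ a ∈ Icc 1 (c - 1), x a + ∑ a ∈ Icc c t, x a := by
    rw [← sum_union (disjoint_left.2 fun a ha hb => by rw [mem_Icc] at ha hb; omega)]
    congr 1; ext a; simp only [mem_Icc, mem_union]; omega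
  have hterm : ∀ a ∈ Icc c t, B * x a = x c * B := by
    intro a ha
    rw [mem_Icc] at ha
    rcases ha.1.eq_or_lt with rfl | hca
    · exact mul_comm _ _
    · exact hx.prod_Icc_mul_eq_mul_prod_Icc hc hca (by omega) (by omega)
  have hcancel : B * ∑ a ∈ Icc c t, x a = 0 := by
    obtain ⟨k, hk⟩ := heven
    rw [mul_sum, sum_congr rfl hterm, sum_const, Nat.card_Icc, hk, ← two_mul, mul_nsmul,
      two_nsmul, ← two_mul, h2, zero_mul, nsmul_zero]
  rw [SemiconjBy, hsplit, mul_add, hcancel, add_zero, mul_comm]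

theorem multiset_prod_mul_sum_pow_eq_zero (hx : SquareChain x m) {c q : ℕ} (hcm : c < m)
    {M : Multiset ℕ} (hM : ∀ a ∈ M, a ∈ Icc 1 c) (hcard : c < Multiset.card M + q) :
    (M.map x).prod * (∑ a ∈ Icc 1 c, x a) ^ q = 0 := by
  induction q generalizing M with
  | zero => rw [pow_zero, mul_one]; exact hx.multiset_prod_eq_zero hcm hM hcard
  | succ q ih =>
    rw [pow_succ', ← mul_assoc, mul_sum, sum_mul]
    refine sum_eq_zero fun a ha => ?_
    rw [mul_comm _ (x a), ← Multiset.prod_cons, ← Multiset.map_cons]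
    exact ih (Multiset.forall_mem_cons.2 ⟨ha, hM⟩) (by rw [Multiset.card_cons]; omega)

end SquareChain

section QuotientRing

variable (n : ℕ) [NeZero n]

theorem Rring.two_eq_zero : (2 : Rring n) = 0 := by
  rw [← map_ofNat (algebraMap (ZMod 2) (Rring n)) 2, show (OfNat.ofNat 2 : ZMod 2) = 0 from rfl,
    map_zero]

theorem squareChain_xR : SquareChain (xR n) n where
  sq_one := by
    have hmem : _ ∈ Rrel n := Ideal.subset_span ⟨1, ⟨le_rfl, NeZero.one_le⟩, rfl⟩
    beta_reduce at hmem
    rw [if_pos rfl, sub_zero] at hmem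
    rwa [xR, ← map_pow, Ideal.Quotient.eq_zero_iff_mem]
  sq_succ i hi hin := by
    have hmem : _ ∈ Rrel n := Ideal.subset_span ⟨i + 1, ⟨by omega, by omega⟩, rfl⟩
    beta_reduce at hmem
    rw [if_neg (by omega), if_neg (by omega)] at hmem
    rw [xR, xR, ← map_pow, ← map_mul, Ideal.Quotient.eq]
    simpa [show i + 1 - 2 = i - 1 by omega] using hmem

end QuotientRing

theorem xR_prod_mul_prod_Icc_mul_sum_pow_eq_zero {n D q : ℕ} [NeZero n] {s : Finset ℕ}
    {f : ℕ → ℕ} (hD : 1 ≤ D) (hDn : D + 2 ≤ n) (heven : Even (n - 1 - D))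
    (hf : ∀ k ∈ s, f k ∈ Icc 1 (D - 1)) (hcard : D ≤ #s + q) :
    (∏ k ∈ s, xR n (f k)) * (∏ l ∈ Icc (D + 1) n, xR n l) *
      (∑ a ∈ Icc 1 (n - 2), xR n a) ^ q = 0 := by
  have hx := squareChain_xR n
  have hswap := hx.semiconjBy_prod_Icc_sum_Icc (Rring.two_eq_zero n) (e := n) hD
    (by omega : D ≤ n - 2 + 1) (by omega) (by omega)
    (by rwa [show n - 2 + 1 - D = n - 1 - D by omega])
  have hL : ∏ k ∈ s, xR n (f k) = ((s.val.map f).map (xR n)).prod := by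
    rw [Multiset.map_map]; rfl
  rw [mul_assoc, (hswap.pow_right q).eq, ← mul_assoc, hL,
    hx.multiset_prod_mul_sum_pow_eq_zero (by omega) (by simpa using hf)
      (by rw [Multiset.card_map, card_val]; omega), zero_mul]

theorem statement4_general (r : ℕ) (p : ℕ → ℕ) (hp1 : 2 ≤ p 1)
    (hmono : ∀ i j, 1 ≤ i → i < j → j ≤ r → p i < p j)
    (n : ℕ) [NeZero n] (hn : n = (∑ k ∈ Finset.Icc 1 r, 2 ^ p k) + 1)
    (i j : ℕ) (hi : 1 ≤ i) (hij : i < j) (hj : j ≤ r)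
    (D : ℕ) (hD : D = (∑ k ∈ Finset.Icc 1 j, 2 ^ p k) - 2 ^ p i)
    (f : ℕ → ℕ)
    (hf : ∀ k ∈ Finset.Icc 1 (D - 2 ^ p j + 1), f k ∈ Finset.Icc 1 (D - 1)) :
    (∏ k ∈ Finset.Icc 1 (D - 2 ^ p j + 1), xR n (f k)) *
      (∏ l ∈ Finset.Icc (D + 1) n, xR n l) *
      (∑ a ∈ Finset.Icc 1 (n - 2), xR n a) ^ (2 ^ p j - 1) = 0 := by
  have hp : ∀ k ∈ Icc 1 r, p k ≠ 0 := by
    intro k hk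
    rw [mem_Icc] at hk
    rcases hk.1.eq_or_lt with rfl | h
    · omega
    · have := hmono 1 k le_rfl h hk.2; omega
  have hEven : ∀ s ⊆ Icc 1 r, Even (∑ k ∈ s, 2 ^ p k) := fun s hs =>
    even_sum _ fun k hk => Nat.even_pow.2 ⟨even_two, hp k (hs hk)⟩
  have hTj : 2 ^ p i + 2 ^ p j ≤ ∑ k ∈ Icc 1 j, 2 ^ p k :=
    calc 2 ^ p i + 2 ^ p j = ∑ k ∈ {i, j}, 2 ^ p k := (sum_pair (f := (2 ^ p ·)) hij.ne).symm
      _ ≤ ∑ k ∈ Icc 1 j, 2 ^ p k := sum_le_sum_of_subset fun k => by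
        simp only [mem_insert, mem_singleton, mem_Icc]; omega
  have hTr : ∑ k ∈ Icc 1 j, 2 ^ p k ≤ ∑ k ∈ Icc 1 r, 2 ^ p k :=
    sum_le_sum_of_subset (Icc_subset_Icc le_rfl hj)
  have hPi : 1 ≤ 2 ^ p i := Nat.one_le_two_pow
  have hPj : 1 ≤ 2 ^ p j := Nat.one_le_two_pow
  have heven : Even (n - 1 - D) := by
    rw [show n - 1 - D = (∑ k ∈ Icc 1 r, 2 ^ p k - ∑ k ∈ Icc 1 j, 2 ^ p k) + 2 ^ p i by omega]
    refine ((Nat.even_sub hTr).2 (iff_of_true (hEven _ subset_rfl) ?_)).add ?_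
    · exact hEven _ (Icc_subset_Icc le_rfl hj)
    · simpa using hEven {i} (by rw [singleton_subset_iff, mem_Icc]; omega)
  exact xR_prod_mul_prod_Icc_mul_sum_pow_eq_zero (by omega) (by omega) heven hf
    (by rw [Nat.card_Icc]; omega)

/-- Theorem 2.8(a): with `P_j = 2^{p_j}`, `T_j = P_1 + ⋯ + P_j`, `n = T_r + 1`,
`S = x_1 + ⋯ + x_{n-2}`, and `D = T_j - P_i` for `1 ≤ i < j ≤ r`:
`L_{D-1} ⋅ (x_{D+1} ⋯ x_n) ⋅ S^{P_j - 1} = 0` in `R_n`, where `L_{D-1}` is any product of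
`D - P_j + 1` of the classes `x_1, …, x_{D-1}` (with repetitions allowed). -/
theorem statement4 (r : ℕ) (hr : 1 ≤ r) (p : ℕ → ℕ) (hp1 : 2 ≤ p 1)
    (hmono : ∀ i j, 1 ≤ i → i < j → j ≤ r → p i < p j)
    (n : ℕ) [NeZero n] (hn : n = (∑ k ∈ Finset.Icc 1 r, 2 ^ p k) + 1)
    (i j : ℕ) (hi : 1 ≤ i) (hij : i < j) (hj : j ≤ r)
    (D : ℕ) (hD : D = (∑ k ∈ Finset.Icc 1 j, 2 ^ p k) - 2 ^ p i)
    (f : ℕ → ℕ)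
    (hf : ∀ k ∈ Finset.Icc 1 (D - 2 ^ p j + 1), f k ∈ Finset.Icc 1 (D - 1)) :
    (∏ k ∈ Finset.Icc 1 (D - 2 ^ p j + 1), xR n (f k)) *
      (∏ l ∈ Finset.Icc (D + 1) n, xR n l) *
      (∑ a ∈ Finset.Icc 1 (n - 2), xR n a) ^ (2 ^ p j - 1) = 0 :=
  statement4_general r p hp1 hmono n hn i j hi hij hj D hD f hf
end
end

section
/- For every m ≥ 1, the element x_1 x_2 ⋯ x_m is nonzero in Q_m. -/
/-! Sum the coefficients of those monomials `x^e` whose exponents satisfy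
`e_1 + ⋯ + e_k ≤ k` for every `k`. This linear functional takes the value `1` on `x_1 ⋯ x_m`
and kills the ideal of relations: multiplying by `x_1^2` breaks the bound at `k = 1`, and for
every monomial `x^e` the monomials `x^e x_i^2` and `x^e x_{i-1} x_i` satisfy the bounds
simultaneously: their prefix sums agree except at `k = i - 1`, where the second exceeds the
first by one, and there the bound of the first at `k = i` gives `e_1 + ⋯ + e_{i-1} ≤ i - 2`. -/

open MvPolynomial Finset
open Fin.NatCast

noncomputable section

theorem AddMonoidHom.map_mul_eq_zero_of_mem_span {A M : Type*} [CommSemiring A]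
    [AddCommMonoid M] (φ : A →+ M) {s : Set A} (hs : ∀ a, ∀ g ∈ s, φ (a * g) = 0)
    {p : A} (hp : p ∈ Ideal.span s) (a : A) : φ (a * p) = 0 := by
  induction hp using Submodule.span_induction generalizing a with
  | mem g hg => exact hs a g hg
  | zero => rw [mul_zero, map_zero]
  | add x y _ _ hx hy => rw [mul_add, map_add, hx, hy, add_zero]
  | smul c x _ hx => rw [smul_eq_mul, ← mul_assoc, hx]

theorem MvPolynomial.map_mul_eq_zero_of_map_monomial_mul {σ R M : Type*} [CommSemiring R]
    [AddCommMonoid M] (φ : MvPolynomial σ R →+ M) {g : MvPolynomial σ R}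
    (hg : ∀ u c, φ (monomial u c * g) = 0) (f : MvPolynomial σ R) : φ (f * g) = 0 := by
  induction f using MvPolynomial.induction_on' with
  | monomial u c => exact hg u c
  | add p q hp hq => rw [add_mul, map_add, hp, hq, add_zero]

theorem Fin.sum_Iic_add_single {m : ℕ} (e : Fin m →₀ ℕ) (j k : Fin m) (c : ℕ) :
    ∑ i ∈ Iic k, (e + Finsupp.single j c) i = ∑ i ∈ Iic k, e i + if j ≤ k then c else 0 := by
  simp [Finset.sum_add_distrib, Finsupp.single_apply]

section PrefixFunctional

variable {R : Type*} [CommRing R] {m : ℕ}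

def PrefixBounded (e : Fin m →₀ ℕ) : Prop :=
  ∀ k : Fin m, ∑ i ∈ Iic k, e i ≤ k + 1

instance : DecidablePred (@PrefixBounded m) := fun _ => Fintype.decidableForallFintype

theorem not_prefixBounded_add_single_two [NeZero m] (e : Fin m →₀ ℕ) :
    ¬ PrefixBounded (e + Finsupp.single 0 2) := by
  intro h
  have h0 := h 0
  rw [Fin.sum_Iic_add_single, if_pos le_rfl, Fin.val_zero] at h0
  omega

theorem prefixBounded_add_single_two_iff (e : Fin m →₀ ℕ) {j' j : Fin m}
    (hj : (j' : ℕ) + 1 = j) :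
    PrefixBounded (e + Finsupp.single j 2) ↔
      PrefixBounded (e + Finsupp.single j' 1 + Finsupp.single j 1) := by
  simp only [PrefixBounded, Fin.sum_Iic_add_single, Fin.le_def]
  refine ⟨fun h k => ?_, fun h k => ?_⟩
  · rcases le_or_gt (j : ℕ) k with hjk | hkj
    · have hk := h k
      split_ifs at * <;> omega
    · have hk := h k
      have hjj := h j
      have hmono : ∑ i ∈ Iic k, e i ≤ ∑ i ∈ Iic j, e i :=
        sum_le_sum_of_subset (Iic_subset_Iic.2 (Fin.le_def.2 hkj.le))
      split_ifs at * <;> omega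
  · have hk := h k
    split_ifs at * <;> omega

variable (R m) in
def prefixFunctional : MvPolynomial (Fin m) R →ₗ[R] R :=
  (basisMonomials (Fin m) R).constr R fun e => if PrefixBounded e then 1 else 0

theorem prefixFunctional_monomial (e : Fin m →₀ ℕ) (c : R) :
    prefixFunctional R m (monomial e c) = if PrefixBounded e then c else 0 := by
  have hbasis : monomial e (1 : R) = basisMonomials (Fin m) R e := by simp
  rw [← mul_one c, ← smul_eq_mul, ← smul_monomial, map_smul, hbasis, prefixFunctional,
    Module.Basis.constr_basis]
  split_ifs <;> simp

theorem prefixFunctional_mul_X_sq [NeZero m] (f : MvPolynomial (Fin m) R) :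
    prefixFunctional R m (f * X 0 ^ 2) = 0 := by
  refine map_mul_eq_zero_of_map_monomial_mul (prefixFunctional R m).toAddMonoidHom
    (fun u c => ?_) f
  rw [LinearMap.toAddMonoidHom_coe, X_pow_eq_monomial, monomial_mul, mul_one,
    prefixFunctional_monomial, if_neg (not_prefixBounded_add_single_two u)]

theorem prefixFunctional_mul_X_sq_sub_X_mul_X {j' j : Fin m} (hj : (j' : ℕ) + 1 = j)
    (f : MvPolynomial (Fin m) R) :
    prefixFunctional R m (f * (X j ^ 2 - X j' * X j)) = 0 := by
  refine map_mul_eq_zero_of_map_monomial_mul (prefixFunctional R m).toAddMonoidHom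
    (fun u c => ?_) f
  rw [LinearMap.toAddMonoidHom_coe, X_pow_eq_monomial, X, X, monomial_mul, mul_sub,
    monomial_mul, monomial_mul, mul_one, mul_one, ← add_assoc, map_sub,
    prefixFunctional_monomial, prefixFunctional_monomial,
    if_congr (prefixBounded_add_single_two_iff u hj) rfl rfl, mul_one, sub_self]

theorem prefixFunctional_prod_X : prefixFunctional R m (∏ j, X j) = 1 := by
  have hprod : ∏ j, (X j : MvPolynomial (Fin m) R) = monomial (∑ j, Finsupp.single j 1) 1 := by
    rw [monomial_sum_one]
    rfl
  rw [hprod, prefixFunctional_monomial, if_pos]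
  intro k
  simp [Finsupp.finsetSum_apply, Finsupp.single_apply]

end PrefixFunctional

theorem prefixFunctional_eq_zero_of_mem_Qrel {m : ℕ} [NeZero m]
    {p : MvPolynomial (Fin m) (ZMod 2)} (hp : p ∈ Qrel m) : prefixFunctional (ZMod 2) m p = 0 := by
  rw [← one_mul p]
  refine (prefixFunctional (ZMod 2) m).toAddMonoidHom.map_mul_eq_zero_of_mem_span ?_ hp 1
  rintro f _ ⟨i, ⟨hi1, him⟩, rfl⟩
  rw [LinearMap.toAddMonoidHom_coe]
  beta_reduce
  split_ifs with h
  · subst h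
    simpa using prefixFunctional_mul_X_sq f
  · refine prefixFunctional_mul_X_sq_sub_X_mul_X ?_ f
    rw [Fin.val_cast_of_lt, Fin.val_cast_of_lt] <;> omega

theorem prod_xQ_eq_mk_prod_X (m : ℕ) [NeZero m] :
    ∏ i ∈ Icc 1 m, xQ m i = Ideal.Quotient.mk (Qrel m) (∏ j : Fin m, X j) := by
  rw [map_prod, ← Ico_add_one_right_eq_Icc, prod_Ico_eq_prod_range, ← Fin.prod_univ_eq_prod_range]
  simp [xQ]

theorem statement10_general (m : ℕ) [NeZero m] :
    (∏ i ∈ Finset.Icc 1 m, xQ m i) ≠ 0 := by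
  rw [prod_xQ_eq_mk_prod_X, Ne, Ideal.Quotient.eq_zero_iff_mem]
  intro hmem
  simpa [prefixFunctional_prod_X] using prefixFunctional_eq_zero_of_mem_Qrel hmem

/-- For every `m ≥ 1`, `x_1 x_2 ⋯ x_m ≠ 0` in `Q_m`. -/
theorem statement10 (m : ℕ) [NeZero m] (hm : 1 ≤ m) :
    (∏ i ∈ Finset.Icc 1 m, xQ m i) ≠ 0 :=
  statement10_general m
end
end

section
/- Let e, f, L be integers with 2 ≤ e ≤ f and L ≥ f + 2, and set p = 3·2^L − 2^{f+1} − 2^{e+1} + 2^e − 2. Then the binomial coefficient C(p, 2^e − 2) is odd. -/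
lemma aux_odd_choose : ∀ e q k : ℕ, k < 2 ^ e → Odd ((q * 2 ^ e + k).choose k) := by
  intro e
  induction e with
  | zero =>
    intro q k hk
    interval_cases k
    simp
  | succ e ih =>
    intro q k hk
    have h := @Choose.choose_modEq_choose_mod_mul_choose_div_nat
      (q * 2 ^ (e + 1) + k) k 2 ⟨Nat.prime_two⟩
    have hmod : (q * 2 ^ (e + 1) + k) % 2 = k % 2 := by
      have h0 : q * 2 ^ (e + 1) % 2 = 0 := by
        rw [pow_succ, ← mul_assoc]
        exact Nat.mul_mod_left _ 2
      omega
    have hdiv : (q * 2 ^ (e + 1) + k) / 2 = q * 2 ^ e + k / 2 := by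
      have : q * 2 ^ (e + 1) + k = 2 * (q * 2 ^ e) + k := by ring
      rw [this, Nat.mul_add_div two_pos]
    have hk2 : k / 2 < 2 ^ e := by
      rw [pow_succ] at hk; omega
    have hO := ih q (k / 2) hk2
    rw [Nat.ModEq, hmod, hdiv, Nat.choose_self, one_mul] at h
    rw [Nat.odd_iff] at hO ⊢
    omega

/-- For `2 ≤ e ≤ f` and `L ≥ f + 2`, with `p = 3·2^L - 2^{f+1} - 2^{e+1} + 2^e - 2`,
the binomial coefficient `C(p, 2^e - 2)` is odd. -/
theorem statement15 (e f L : ℕ) (he : 2 ≤ e) (hef : e ≤ f) (hL : f + 2 ≤ L)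
    (p : ℕ) (hp : p = 3 * 2 ^ L - 2 ^ (f + 1) - 2 ^ (e + 1) + 2 ^ e - 2) :
    Odd (Nat.choose p (2 ^ e - 2)) := by
  set x := 2 ^ (L - e) with hxdef
  set y := 2 ^ (f + 1 - e) with hydef
  set a := 2 ^ e with hadef
  have heL : e ≤ L := by omega
  have hef1 : e ≤ f + 1 := by omega
  have hxa : x * a = 2 ^ L := by
    rw [hxdef, hadef, ← pow_add, Nat.sub_add_cancel heL]
  have hya : y * a = 2 ^ (f + 1) := by
    rw [hydef, hadef, ← pow_add, Nat.sub_add_cancel hef1]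
  have h2a : 2 * a = 2 ^ (e + 1) := by rw [hadef, pow_succ]; ring
  have ha4 : 4 ≤ a := by
    have := Nat.pow_le_pow_right (by norm_num : 1 ≤ 2) he
    simpa [hadef] using this
  have hy2 : 2 ≤ y := by
    have : 1 ≤ f + 1 - e := by omega
    have := Nat.pow_le_pow_right (by norm_num : 1 ≤ 2) this
    simpa [hydef] using this
  have hxy : 2 * y ≤ x := by
    have h1 : f + 1 - e + 1 ≤ L - e := by omega
    have := Nat.pow_le_pow_right (by norm_num : 1 ≤ 2) h1
    rw [pow_succ] at this
    rw [hxdef, hydef]; omega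
  have hy_a : 2 * a ≤ y * a := Nat.mul_le_mul_right a hy2
  have hx_ya : 2 * (y * a) ≤ x * a := by
    calc 2 * (y * a) = (2 * y) * a := by ring
    _ ≤ x * a := Nat.mul_le_mul_right a hxy
  have hx_a : 4 * a ≤ x * a := by
    have : 4 ≤ x := by omega
    exact Nat.mul_le_mul_right a this
  -- rewrite p
  have hq : p = (3 * x - y - 2) * a + (2 ^ e - 2) := by
    have key : (3 * x - y - 2) * a = 3 * (x * a) - y * a - 2 * a := by
      rw [Nat.sub_mul, Nat.sub_mul, mul_assoc]
    rw [hp, key, ← hxa, ← hya, ← h2a, ← hadef]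
    omega
  rw [hq]
  exact aux_odd_choose e (3 * x - y - 2) (2 ^ e - 2) (by omega)
end

section
/- Let n ≥ 3 and let k ≥ 0 and D ≥ 1 be integers with 2^k ≤ D ≤ n − 2. Then for every ℓ with D ≤ ℓ ≤ n − 2, one has (x_{D+1} x_{D+2} ⋯ x_n) · x_ℓ^{2^k} = x_{D+1−2^k} x_{D+2−2^k} ⋯ x_n in R_n (independent of ℓ); consequently, if n − 1 − D is even, then (x_{D+1} ⋯ x_n) · ( x_D^{2^k} + x_{D+1}^{2^k} + ⋯ + x_{n−2}^{2^k} ) = 0 in R_n. -/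
/-!
Within the product `x_{D+1} ⋯ x_n` the relation `x_{i+1}^2 = x_i x_{i+1}` lets a factor `x_{l+1}`
be replaced by `x_l`, so multiplying by `x_l` (`D ≤ l ≤ n-2`) is the same as multiplying by `x_D`,
which extends the product down to `x_D`. Writing `x_l^{2^{k+1}} = x_l^{2^k} x_l^{2^k}` and inducting
on `k`, each factor `x_l^{2^k}` lowers the start of the product by `2^k`. The sum then consists of
`n - 1 - D` equal terms, which vanishes in characteristic `2` when that number is even.
-/

open MvPolynomial Finset Fin.NatCast

noncomputable section

lemma xR_succ_sq {n i : ℕ} [NeZero n] (hi : 1 ≤ i) (hin : i + 2 ≤ n) :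
    xR n (i + 1) ^ 2 = xR n i * xR n (i + 1) := by
  have hmem : (X ((i + 1 - 1 : ℕ) : Fin n) ^ 2 - X ((i + 1 - 2 : ℕ) : Fin n) *
      X ((i + 1 - 1 : ℕ) : Fin n) : MvPolynomial (Fin n) (ZMod 2)) ∈ Rrel n := by
    refine Ideal.subset_span ⟨i + 1, ⟨by omega, by omega⟩, ?_⟩
    dsimp only
    rw [if_neg (show i + 1 ≠ 1 by omega), if_neg (show i + 1 ≠ n by omega)]
  rw [show i + 1 - 2 = i - 1 by omega] at hmem
  simpa [xR, ← map_pow, ← map_mul, Ideal.Quotient.eq] using hmem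

lemma prod_mul_xR_succ {n l : ℕ} [NeZero n] {s : Finset ℕ} (hl : 1 ≤ l) (hln : l + 2 ≤ n)
    (hs : l + 1 ∈ s) :
    (∏ j ∈ s, xR n j) * xR n (l + 1) = (∏ j ∈ s, xR n j) * xR n l := by
  rw [← mul_prod_erase s _ hs]
  calc xR n (l + 1) * (∏ j ∈ s.erase (l + 1), xR n j) * xR n (l + 1)
      = (∏ j ∈ s.erase (l + 1), xR n j) * xR n (l + 1) ^ 2 := by ring
    _ = xR n (l + 1) * (∏ j ∈ s.erase (l + 1), xR n j) * xR n l := by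
      rw [xR_succ_sq hl hln]; ring

lemma prod_Icc_mul_xR {n D l : ℕ} [NeZero n] (hD : 1 ≤ D) (hDl : D ≤ l) (hln : l + 2 ≤ n) :
    (∏ j ∈ Icc (D + 1) n, xR n j) * xR n l = ∏ j ∈ Icc D n, xR n j := by
  induction l, hDl using Nat.le_induction with
  | base =>
    rw [← insert_Icc_add_one_left_eq_Icc (show D ≤ n by omega), prod_insert (by simp), mul_comm]
  | succ l hDl ih =>
    rw [prod_mul_xR_succ (l := l) (by omega) (by omega) (mem_Icc.2 ⟨by omega, by omega⟩),
      ih (by omega)]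

lemma prod_Icc_mul_xR_pow_two_pow {n : ℕ} [NeZero n] (k : ℕ) {D l : ℕ} (hkD : 2 ^ k ≤ D)
    (hDl : D ≤ l) (hln : l + 2 ≤ n) :
    (∏ j ∈ Icc (D + 1) n, xR n j) * xR n l ^ 2 ^ k = ∏ j ∈ Icc (D + 1 - 2 ^ k) n, xR n j := by
  induction k generalizing D with
  | zero => simpa using prod_Icc_mul_xR (by simpa using hkD) hDl hln
  | succ k ih =>
    have hk : 2 ^ k ≤ D - 2 ^ k := by rw [pow_succ] at hkD; omega
    rw [pow_succ, pow_mul, sq, ← mul_assoc, ih (by omega) hDl,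
      show D + 1 - 2 ^ k = D - 2 ^ k + 1 by omega, ih hk ((Nat.sub_le D _).trans hDl),
      show D - 2 ^ k + 1 - 2 ^ k = D + 1 - 2 ^ k * 2 by omega]

lemma natCast_eq_zero_of_even {R : Type*} [Semiring R] [Algebra (ZMod 2) R] {m : ℕ}
    (hm : Even m) : (m : R) = 0 := by
  rw [← map_natCast (algebraMap (ZMod 2) R), ZMod.natCast_eq_zero_iff_even.2 hm, map_zero]

theorem statement18_general (n : ℕ) [NeZero n] (k D : ℕ)
    (hkD : 2 ^ k ≤ D) (hDn : D ≤ n - 2) :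
    (∀ l, D ≤ l → l ≤ n - 2 →
      (∏ j ∈ Finset.Icc (D + 1) n, xR n j) * xR n l ^ (2 ^ k) =
        ∏ j ∈ Finset.Icc (D + 1 - 2 ^ k) n, xR n j) ∧
    (Even (n - 1 - D) →
      (∏ j ∈ Finset.Icc (D + 1) n, xR n j) *
        (∑ l ∈ Finset.Icc D (n - 2), xR n l ^ (2 ^ k)) = 0) := by
  have hD : 1 ≤ D := Nat.one_le_two_pow.trans hkD
  have key : ∀ l, D ≤ l → l ≤ n - 2 →
      (∏ j ∈ Icc (D + 1) n, xR n j) * xR n l ^ (2 ^ k) =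
        ∏ j ∈ Icc (D + 1 - 2 ^ k) n, xR n j :=
    fun l hDl hln => prod_Icc_mul_xR_pow_two_pow k hkD hDl (by omega)
  refine ⟨key, fun heven => ?_⟩
  rw [mul_sum, sum_congr rfl fun l hl => key l (mem_Icc.1 hl).1 (mem_Icc.1 hl).2, sum_const,
    Nat.card_Icc, show n - 2 + 1 - D = n - 1 - D by omega, nsmul_eq_mul,
    natCast_eq_zero_of_even heven, zero_mul]

/-- From the proof of Theorem 2.8(a): in `R_n` with `2^k ≤ D ≤ n - 2`, for every
`D ≤ ℓ ≤ n - 2` one has `(x_{D+1} ⋯ x_n) ⋅ x_ℓ^{2^k} = x_{D+1-2^k} ⋯ x_n` (independent of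
`ℓ`); consequently, if `n - 1 - D` is even then
`(x_{D+1} ⋯ x_n) ⋅ (x_D^{2^k} + ⋯ + x_{n-2}^{2^k}) = 0`. -/
theorem statement18 (n : ℕ) [NeZero n] (hn : 3 ≤ n) (k D : ℕ)
    (hD1 : 1 ≤ D) (hkD : 2 ^ k ≤ D) (hDn : D ≤ n - 2) :
    (∀ l, D ≤ l → l ≤ n - 2 →
      (∏ j ∈ Finset.Icc (D + 1) n, xR n j) * xR n l ^ (2 ^ k) =
        ∏ j ∈ Finset.Icc (D + 1 - 2 ^ k) n, xR n j) ∧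
    (Even (n - 1 - D) →
      (∏ j ∈ Finset.Icc (D + 1) n, xR n j) *
        (∑ l ∈ Finset.Icc D (n - 2), xR n l ^ (2 ^ k)) = 0) :=
  statement18_general n k D hkD hDn
end
end
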